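/- Under the same hypotheses (D acyclic on U ⊇ V, N_V(D) full-dimensional in N(G), chordless bidirected p-cycle on [p], p ≥ 4, A the ancestor set), a proper directed path in D whose target lies in {2,…,p} cannot contain any edge of E_A(1,2). -/

import Mathlib

open Matrix BigOperators

def SupportedOn {V : Type} (E : V → V → Prop) (Λ : Matrix V V ℝ) : Prop :=
  ∀ u v, ¬ E u v → Λ u v = 0

def Acyclic {V : Type} (E : V → V → Prop) : Prop :=
  ∀ v, ¬ Relation.TransGen E v v

def cycAdj (p : ℕ) (i j : Fin p) : Prop :=
  (i.1 + 1) % p = j.1 ∨ (j.1 + 1) % p = i.1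

structure Trek {V : Type} (E : V → V → Prop) (u v : V) where
  left : List V
  right : List V
  left_ne : left ≠ []
  right_ne : right ≠ []
  top_eq : left.head left_ne = right.head right_ne
  chain_left : List.Chain' E left
  chain_right : List.Chain' E right
  last_left : left.getLast left_ne = u
  last_right : right.getLast right_ne = v

def Trek.top {V : Type} {E : V → V → Prop} {u v : V} (τ : Trek E u v) : V :=
  τ.left.head τ.left_ne

def edgeProd {V : Type} (Λ : Matrix V V ℝ) (l : List V) : ℝ :=
  ((l.zip l.tail).map fun p => Λ p.1 p.2).prod

def Trek.mono {V : Type} {E : V → V → Prop} {u v : V} (Λ Ω : Matrix V V ℝ)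
    (τ : Trek E u v) : ℝ :=
  Ω τ.top τ.top * edgeProd Λ τ.left * edgeProd Λ τ.right

structure TrekSystem {V : Type} (E : V → V → Prop) {n : ℕ} (x y : Fin n → V) where
  perm : Equiv.Perm (Fin n)
  trek : ∀ i, Trek E (x i) (y (perm i))

def TrekSystem.NoSided {V : Type} {E : V → V → Prop} {n : ℕ} {x y : Fin n → V}
    (S : TrekSystem E x y) : Prop :=
  ∀ i j, i ≠ j →
    (∀ a : V, ¬(a ∈ (S.trek i).left ∧ a ∈ (S.trek j).left)) ∧
    (∀ a : V, ¬(a ∈ (S.trek i).right ∧ a ∈ (S.trek j).right))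

structure DWalk {U : Type} (E : U → U → Prop) (u v : U) where
  steps : List (Bool × U × U)
  ne : steps ≠ []
  first_eq : (steps.head ne).2.1 = u
  last_eq : (steps.getLast ne).2.2 = v
  edge : ∀ s ∈ steps, (s.1 = true → E s.2.1 s.2.2) ∧ (s.1 = false → E s.2.2 s.2.1)
  chain : List.Chain' (fun s t : Bool × U × U => s.2.2 = t.2.1) steps

def stepPairOK {U : Type} (A : Set U) (s t : Bool × U × U) : Prop :=
  ((s.1 = true ∧ t.1 = false) → s.2.2 ∈ A) ∧ (¬(s.1 = true ∧ t.1 = false) → s.2.2 ∉ A)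

def DWalk.DConn {U : Type} {E : U → U → Prop} {u v : U} (A : Set U)
    (w : DWalk E u v) : Prop :=
  List.Chain' (stepPairOK A) w.steps

def topOf {U : Type} : List (Bool × U × U) → U → U
  | [], u => u
  | (d, a, _b) :: rest, _ => if d then a else topOf rest _b

def DWalk.top {U : Type} {E : U → U → Prop} {u v : U} (w : DWalk E u v) : U :=
  topOf w.steps u

def TopsA {U : Type} (E : U → U → Prop) (A : Set U) (u v : U) : Set U :=
  {t | ∃ w : DWalk E u v, w.DConn A ∧ w.top = t}

def anAvoid {U : Type} (E : U → U → Prop) (A : Set U) (x : U) : Set U :=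
  {u | u ∉ A ∧ Relation.ReflTransGen (fun a b => E a b ∧ a ∉ A ∧ b ∉ A) u x}

def EA {U : Type} (E : U → U → Prop) (A : Set U) (n1 n2 : U) : Set (U × U) :=
  {e | E e.1 e.2 ∧ e.1 ∈ TopsA E A n1 n2 ∧ e.2 ∈ anAvoid E A n1 ∧ e.2 ∉ TopsA E A n1 n2}

def IsProperPath {U : Type} (E : U → U → Prop) (A : Set U) (l : List U) : Prop :=
  l ≠ [] ∧ List.Chain' (fun a b => E a b ∧ a ∉ A) l

def DigraphCov {U : Type} [Fintype U] [DecidableEq U] (E : U → U → Prop) :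
    Set (Matrix U U ℝ) :=
  {S | ∃ Λ Ω : Matrix U U ℝ, SupportedOn E Λ ∧ Ω.IsDiag ∧ (∀ u, 0 < Ω u u) ∧
        S = ((1 - Λ)⁻¹)ᵀ * Ω * (1 - Λ)⁻¹}

def BSupported {V : Type} (B : SimpleGraph V) (Ω : Matrix V V ℝ) : Prop :=
  ∀ u v, u ≠ v → ¬ B.Adj u v → Ω u v = 0

def MixedCov {V : Type} [Fintype V] [DecidableEq V] (D : V → V → Prop)
    (B : SimpleGraph V) : Set (Matrix V V ℝ) :=
  {S | ∃ Λ Ω : Matrix V V ℝ, SupportedOn D Λ ∧ Ω.PosDef ∧ BSupported B Ω ∧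
        S = ((1 - Λ)⁻¹)ᵀ * Ω * (1 - Λ)⁻¹}

def StrictlyGaussianCausal {V : Type} [Fintype V] [DecidableEq V]
    (D : V → V → Prop) (B : SimpleGraph V) : Prop :=
  ∃ (U : Type) (iF : Fintype U) (iD : DecidableEq U) (ι : V ↪ U) (E : U → U → Prop),
    Acyclic E ∧
      (fun S : Matrix U U ℝ => S.submatrix ι ι) '' (@DigraphCov U iF iD E) = MixedCov D B

def Chordal {V : Type} (B : SimpleGraph V) : Prop :=
  ∀ n : ℕ, 4 ≤ n → ∀ f : ZMod n → V, Function.Injective f →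
    (∀ i, B.Adj (f i) (f (i + 1))) →
    ∃ i j : ZMod n, j ≠ i + 1 ∧ i ≠ j + 1 ∧ i ≠ j ∧ B.Adj (f i) (f j)

def ChainGraph {V : Type} (D : V → V → Prop) (B : SimpleGraph V) : Prop :=
  ¬ ∃ u v, D u v ∧ Relation.ReflTransGen (fun a b => D a b ∨ B.Adj a b) v u

/-!
Cycle nodes are indexed `0, …, p-1` (the paper's `1, …, p`). Suppose `a → b` is an edge of the
path lying in `E_A(0,1)` and the path ends at node `j ≠ 0`. Since `b ∈ an_A(0)` and the rest of
the path runs from `b` to `j`, both avoiding `A`, the walk `0 ← ⋯ ← b → ⋯ → j` is d-connecting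
with top `b`. For `j = 1` this makes `b` a top, which edges of `E_A(0,1)` exclude. Otherwise `j`
is adjacent to `0`, i.e. `j = p-1`. As `a` is the top of a d-connecting walk from `0` to `1`,
the suffix of that walk from `a` prefixed by `j ← ⋯ ← b ← a` is d-connecting from `p-1` to `1`
(every new junction is a non-collider outside `A`), but `p-1` and `1` are not adjacent for
`p ≥ 4`.
-/

open Relation

section

variable {U : Type} {E : U → U → Prop} {A : Set U}

def AvoidAdj (E : U → U → Prop) (A : Set U) (a b : U) : Prop :=
  E a b ∧ a ∉ A ∧ b ∉ A

/-- A `DWalk` has at least one step; this also admits the trivial walk at `u = v = t`. -/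
def HasDConnWalk (E : U → U → Prop) (A : Set U) (u v t : U) : Prop :=
  (u = v ∧ u = t) ∨ ∃ w : DWalk E u v, w.DConn A ∧ w.top = t

lemma stepPairOK_of_not_collider {s t : Bool × U × U} (h : ¬(s.1 = true ∧ t.1 = false))
    (hs : s.2.2 ∉ A) : stepPairOK A s t :=
  ⟨fun hc => absurd hc h, fun _ => hs⟩

namespace DWalk

def single (d : Bool) {x y : U} (h : cond d (E x y) (E y x)) : DWalk E x y where
  steps := [(d, x, y)]
  ne := List.cons_ne_nil _ _
  first_eq := rfl
  last_eq := rfl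
  edge s hs := by
    rw [List.mem_singleton.mp hs]
    cases d <;> simp_all
  chain := List.isChain_singleton _

def cons (d : Bool) {x y v : U} (h : cond d (E x y) (E y x)) (w : DWalk E y v) :
    DWalk E x v where
  steps := (d, x, y) :: w.steps
  ne := List.cons_ne_nil _ _
  first_eq := rfl
  last_eq := by rw [List.getLast_cons w.ne]; exact w.last_eq
  edge s hs := by
    rcases List.mem_cons.mp hs with rfl | hs
    · cases d <;> simp_all
    · exact w.edge s hs
  chain := by
    refine List.isChain_cons.mpr ⟨fun t ht => ?_, w.chain⟩
    rw [List.head?_eq_some_head w.ne, Option.mem_some_iff] at ht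
    rw [← ht, w.first_eq]

def tail {u v : U} (w : DWalk E u v) {s : Bool × U × U} {rest : List (Bool × U × U)}
    (hw : w.steps = s :: rest) (hrest : rest ≠ []) : DWalk E s.2.2 v where
  steps := rest
  ne := hrest
  first_eq :=
    ((List.isChain_cons.mp (hw ▸ w.chain)).1 _ (List.head?_eq_some_head hrest)).symm
  last_eq := by
    have := w.last_eq
    simp_rw [hw, List.getLast_cons hrest] at this
    exact this
  edge t ht := w.edge t (hw ▸ List.mem_cons_of_mem s ht)
  chain := (hw ▸ w.chain : List.IsChain _ (s :: rest)).tail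

variable {d : Bool} {x y u v : U}

lemma dConn_single (h : cond d (E x y) (E y x)) : (single d h).DConn A :=
  List.isChain_singleton _

lemma DConn.cons {h : cond d (E x y) (E y x)} {w : DWalk E y v} (hw : w.DConn A)
    (hxy : stepPairOK A (d, x, y) (w.steps.head w.ne)) : (cons d h w).DConn A := by
  refine List.isChain_cons.mpr ⟨fun t ht => ?_, hw⟩
  rw [List.head?_eq_some_head w.ne, Option.mem_some_iff] at ht
  exact ht ▸ hxy

lemma DConn.tail {w : DWalk E u v} (hD : w.DConn A) {s : Bool × U × U}
    {rest : List (Bool × U × U)} (hw : w.steps = s :: rest) (hrest : rest ≠ []) :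
    (w.tail hw hrest).DConn A :=
  (hw ▸ hD : List.IsChain _ (s :: rest)).tail

lemma top_eq_of_head_fwd (w : DWalk E u v) (h : (w.steps.head w.ne).1 = true) :
    w.top = u := by
  obtain ⟨⟨d, x, y⟩, rest, hw⟩ := List.exists_cons_of_ne_nil w.ne
  have hx : x = u := by simpa only [hw, List.head_cons] using w.first_eq
  simp only [hw, List.head_cons] at h
  simp [DWalk.top, hw, topOf, h, hx]

lemma top_eq_tail_top (w : DWalk E u v) {x y : U} {rest : List (Bool × U × U)}
    (hw : w.steps = (false, x, y) :: rest) (hrest : rest ≠ []) :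
    w.top = (w.tail hw hrest).top := by
  simp [DWalk.top, DWalk.tail, hw, topOf]

/-- The suffix of `w` that starts at its top. -/
theorem exists_hasDConnWalk_top {u : U} (w : DWalk E u v) (hD : w.DConn A) :
    ∃ t, HasDConnWalk E A w.top v t := by
  obtain ⟨⟨d, x, y⟩, rest, hw⟩ := List.exists_cons_of_ne_nil w.ne
  cases d with
  | true =>
    have htop := w.top_eq_of_head_fwd (by simp [hw])
    rw [htop]
    exact ⟨u, Or.inr ⟨w, hD, htop⟩⟩
  | false =>
    by_cases hrest : rest = []
    · subst hrest
      have hyv : y = v := by simpa only [hw, List.getLast_singleton] using w.last_eq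
      have htop : w.top = y := by simp [DWalk.top, hw, topOf]
      exact ⟨v, Or.inl ⟨htop.trans hyv, htop.trans hyv⟩⟩
    · rw [w.top_eq_tail_top hw hrest]
      exact exists_hasDConnWalk_top (w.tail hw hrest) (hD.tail hw hrest)
termination_by w.steps.length
decreasing_by simp [DWalk.tail, hw]

end DWalk

open DWalk

lemma HasDConnWalk.exists_dWalk {u v t : U} (h : HasDConnWalk E A u v t) (huv : u ≠ v) :
    ∃ w : DWalk E u v, w.DConn A ∧ w.top = t :=
  h.resolve_left fun h => huv h.1

lemma HasDConnWalk.cons_bwd {x y v t : U} (hyx : E y x) (hy : y ∉ A)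
    (h : HasDConnWalk E A y v t) : ∃ w : DWalk E x v, w.DConn A ∧ w.top = t := by
  rcases h with ⟨rfl, rfl⟩ | ⟨w, hw, rfl⟩
  · exact ⟨single false hyx, dConn_single _, rfl⟩
  · exact ⟨cons false hyx w, hw.cons (stepPairOK_of_not_collider (by simp) hy), rfl⟩

lemma HasDConnWalk.of_reflTransGen {x y v t : U} (hyx : ReflTransGen (AvoidAdj E A) y x)
    (h : HasDConnWalk E A y v t) : HasDConnWalk E A x v t := by
  induction hyx with
  | refl => exact h
  | tail _ hcx ih => exact Or.inr (ih.cons_bwd hcx.1 hcx.2.1)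

lemma exists_dWalk_head_fwd_of_reflTransGen {b v : U} (h : ReflTransGen (AvoidAdj E A) b v)
    (hbv : b ≠ v) : ∃ w : DWalk E b v, w.DConn A ∧ (w.steps.head w.ne).1 = true := by
  induction h using ReflTransGen.head_induction_on with
  | refl => exact absurd rfl hbv
  | @head b c hbc _ ih =>
    by_cases hcv : c = v
    · subst hcv
      exact ⟨single true hbc.1, dConn_single _, rfl⟩
    · obtain ⟨w, hw, hhead⟩ := ih hcv
      refine ⟨cons true hbc.1 w, hw.cons (stepPairOK_of_not_collider ?_ hbc.2.2), rfl⟩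
      simp [hhead]

lemma hasDConnWalk_source_of_reflTransGen {b v : U} (h : ReflTransGen (AvoidAdj E A) b v) :
    HasDConnWalk E A b v b := by
  by_cases hbv : b = v
  · exact Or.inl ⟨hbv, rfl⟩
  · obtain ⟨w, hw, hhead⟩ := exists_dWalk_head_fwd_of_reflTransGen h hbv
    exact Or.inr ⟨w, hw, w.top_eq_of_head_fwd hhead⟩

lemma hasDConnWalk_of_common_source {b u v : U} (hu : ReflTransGen (AvoidAdj E A) b u)
    (hv : ReflTransGen (AvoidAdj E A) b v) : HasDConnWalk E A u v b :=
  (hasDConnWalk_source_of_reflTransGen hv).of_reflTransGen hu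

lemma hasDConnWalk_of_mem_TopsA {a b x v : U} (hab : E a b) (ha : a ∉ A)
    (haT : a ∈ TopsA E A x v) : ∃ t, HasDConnWalk E A b v t := by
  obtain ⟨W, hW, rfl⟩ := haT
  obtain ⟨t, ht⟩ := W.exists_hasDConnWalk_top hW
  obtain ⟨w, hw, -⟩ := ht.cons_bwd hab ha
  exact ⟨w.top, Or.inr ⟨w, hw, rfl⟩⟩

lemma List.exists_eq_append_cons_cons_of_mem_zip_tail {α : Type*} :
    ∀ {l : List α} {a b : α}, (a, b) ∈ l.zip l.tail → ∃ l₁ l₂, l = l₁ ++ a :: b :: l₂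
  | [], _, _, h | [_], _, _, h => by simp at h
  | x :: y :: r, a, b, h => by
    rcases List.mem_cons.mp h with h | h
    · obtain ⟨rfl, rfl⟩ := Prod.mk.inj h
      exact ⟨[], r, rfl⟩
    · obtain ⟨l₁, l₂, hl⟩ := exists_eq_append_cons_cons_of_mem_zip_tail h
      exact ⟨x :: l₁, l₂, by rw [hl]; rfl⟩

lemma reflTransGen_avoidAdj {b x : U} (h : ReflTransGen (fun a c => E a c ∧ a ∉ A) b x)
    (hx : x ∉ A) : ReflTransGen (AvoidAdj E A) b x := by
  induction h with
  | refl => rfl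
  | tail _ hcx ih => exact (ih hcx.2).tail ⟨hcx.1, hcx.2, hx⟩

lemma IsProperPath.reflTransGen_of_mem_zip_tail {l : List U} (hl : IsProperPath E A l)
    (hne : l ≠ []) (hlast : l.getLast hne ∉ A) {a b : U} (he : (a, b) ∈ l.zip l.tail) :
    E a b ∧ a ∉ A ∧ ReflTransGen (AvoidAdj E A) b (l.getLast hne) := by
  obtain ⟨l₁, l₂, rfl⟩ := List.exists_eq_append_cons_cons_of_mem_zip_tail he
  obtain ⟨-, hab, hbl⟩ := List.isChain_append_cons_cons.mp hl.2
  have hlast' : (l₁ ++ a :: b :: l₂).getLast hne = (b :: l₂).getLast (List.cons_ne_nil _ _) := by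
    simp
  rw [hlast'] at hlast ⊢
  exact ⟨hab.1, hab.2,
    reflTransGen_avoidAdj (List.relationReflTransGen_of_exists_isChain_cons _ hbl rfl) hlast⟩

lemma not_cycAdj_of_val_eq_zero_of_val_eq_one {p : ℕ} (hp : 4 ≤ p) {i j k : Fin p}
    (hi : i.1 = 0) (hk : k.1 = 1) (h0 : cycAdj p i j) (h1 : cycAdj p j k) : False := by
  obtain ⟨j, hj⟩ := j
  have h01 : (0 + 1) % p = 1 := Nat.mod_eq_of_lt (by omega)
  have h12 : (1 + 1) % p = 2 := Nat.mod_eq_of_lt (by omega)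
  have hj1 : (j + 1 < p ∧ (j + 1) % p = j + 1) ∨ (j + 1 = p ∧ (j + 1) % p = 0) := by
    rcases Nat.lt_or_ge (j + 1) p with h | h
    · exact Or.inl ⟨h, Nat.mod_eq_of_lt h⟩
    · have h : j + 1 = p := by omega
      exact Or.inr ⟨h, by rw [h, Nat.mod_self]⟩
  simp only [cycAdj, hi, hk, h01, h12] at h0 h1
  omega

end

theorem stmt12 {U : Type} (E : U → U → Prop) (A : Set U)
    {p : ℕ} (hp : 4 ≤ p) (cyc : Fin p ↪ U) (hA : ∀ i, cyc i ∉ A)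
    (hdc : ∀ i j : Fin p, i ≠ j →
      ((∃ w : DWalk E (cyc i) (cyc j), w.DConn A) ↔ cycAdj p i j))
    (l : List U) (hne : l ≠ []) (hl : IsProperPath E A l)
    (htarget : ∃ j : Fin p, j ≠ ⟨0, by omega⟩ ∧ l.getLast hne = cyc j) :
    ∀ e ∈ l.zip l.tail, e ∉ EA E A (cyc ⟨0, by omega⟩) (cyc ⟨1, by omega⟩) := by
  rintro ⟨a, b⟩ he ⟨-, haT, hb0, hbT⟩
  obtain ⟨j, hj0, hlast⟩ := htarget
  obtain ⟨hab, ha, hbj⟩ := hl.reflTransGen_of_mem_zip_tail hne (hlast ▸ hA j) he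
  rw [hlast] at hbj
  have htrek := hasDConnWalk_of_common_source hb0.2 hbj
  by_cases hj1 : j = ⟨1, by omega⟩
  · subst hj1
    exact hbT (htrek.exists_dWalk (cyc.injective.ne (by simp)))
  · obtain ⟨w₀, hw₀, -⟩ := htrek.exists_dWalk (cyc.injective.ne (Ne.symm hj0))
    obtain ⟨t, hbt⟩ := hasDConnWalk_of_mem_TopsA hab ha haT
    obtain ⟨w₁, hw₁, -⟩ := (hbt.of_reflTransGen hbj).exists_dWalk (cyc.injective.ne hj1)
    exact not_cycAdj_of_val_eq_zero_of_val_eq_one hp rfl rfl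
      ((hdc _ _ (Ne.symm hj0)).1 ⟨w₀, hw₀⟩) ((hdc _ _ hj1).1 ⟨w₁, hw₁⟩)
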